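/- For 1 ≤ p < ∞ and s > 0, the map h_p^(s) : ℓ^p → ℓ^p is a homeomorphism of ℓ^p onto itself. -/

import Mathlib

/-!
Write `T n x = ∑_{k ≥ n} ‖x k‖ ^ p`. By definition `‖h_s(x) n‖ ^ p = T n x ^ s - T (n + 1) x ^ s`,
so by telescoping the tails of `h_s(x)` are `T n (h_s x) = T n x ^ s`, while `h_s(x) n` has the
phase of `x n`. Hence `h_{1/s}` inverts `h_s`, and `‖h_s(x)‖ = ‖x‖ ^ s`.

For continuity, every coordinate of `h_s(x)` depends continuously on `x` (through finitely many
coordinates and `‖x‖`), and so does `‖h_s(x)‖`. In `ℓ^p` with `p < ∞`, coordinatewise convergence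
together with convergence of the norms forces norm convergence (the Radon–Riesz property), since
the mass of a tail is the total mass minus that of finitely many coordinates.
-/

open scoped ENNReal

noncomputable def lpTail (p : ℝ≥0∞) (x : ℕ → ℂ) (n : ℕ) : ℝ :=
  ∑' k : ℕ, ‖x (n + k)‖ ^ p.toReal

noncomputable def hMap (p : ℝ≥0∞) (s : ℝ) (x : ℕ → ℂ) (n : ℕ) : ℂ :=
  if x n = 0 then 0
  else (x n / ‖x n‖) *
    ((((lpTail p x n) ^ s - (lpTail p x (n + 1)) ^ s) ^ (1 / p.toReal) : ℝ) : ℂ)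

open Filter Topology

section Tail

variable {p : ℝ≥0∞} {x : ℕ → ℂ}

lemma lpTail_nonneg (p : ℝ≥0∞) (x : ℕ → ℂ) (n : ℕ) : 0 ≤ lpTail p x n :=
  tsum_nonneg fun _ => by positivity

lemma lpTail_eq_norm_rpow_add (hx : Summable fun n => ‖x n‖ ^ p.toReal) (n : ℕ) :
    lpTail p x n = ‖x n‖ ^ p.toReal + lpTail p x (n + 1) := by
  have hshift : Summable fun k => ‖x (n + k)‖ ^ p.toReal :=
    ((summable_nat_add_iff n).2 hx).congr fun k => by rw [add_comm]
  simp only [lpTail, hshift.tsum_eq_zero_add, add_zero, add_assoc, add_comm 1]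

lemma lpTail_succ_le (hx : Summable fun n => ‖x n‖ ^ p.toReal) (n : ℕ) :
    lpTail p x (n + 1) ≤ lpTail p x n := by
  rw [lpTail_eq_norm_rpow_add hx n]
  exact le_add_of_nonneg_left (by positivity)

lemma lpTail_succ_lt (hx : Summable fun n => ‖x n‖ ^ p.toReal) {n : ℕ}
    (hxn : x n ≠ 0) : lpTail p x (n + 1) < lpTail p x n := by
  rw [lpTail_eq_norm_rpow_add hx n]
  exact lt_add_of_pos_left _ (Real.rpow_pos_of_pos (norm_pos_iff.2 hxn) _)

lemma tendsto_lpTail_atTop (p : ℝ≥0∞) (x : ℕ → ℂ) :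
    Tendsto (lpTail p x) atTop (𝓝 0) := by
  have := tendsto_sum_nat_add fun k => ‖x k‖ ^ p.toReal
  simp only [add_comm _ (_ : ℕ)] at this
  exact this

end Tail

section Modulus

variable {p : ℝ≥0∞} {s : ℝ} {x : ℕ → ℂ}

-- `0 / 0 = 0` makes this hold also where `x n = 0`.
lemma hMap_eq (p : ℝ≥0∞) (s : ℝ) (x : ℕ → ℂ) (n : ℕ) :
    hMap p s x n = (x n / ‖x n‖) *
      ((((lpTail p x n) ^ s - (lpTail p x (n + 1)) ^ s) ^ (1 / p.toReal) : ℝ) : ℂ) := by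
  unfold hMap
  split_ifs with h <;> simp [h]

lemma norm_hMap (hq : 0 < p.toReal) (hs : 0 ≤ s) (hx : Summable fun n => ‖x n‖ ^ p.toReal)
    (n : ℕ) :
    ‖hMap p s x n‖ = ((lpTail p x n) ^ s - (lpTail p x (n + 1)) ^ s) ^ (1 / p.toReal) := by
  by_cases hxn : x n = 0
  · have : lpTail p x n = lpTail p x (n + 1) := by
      rw [lpTail_eq_norm_rpow_add hx n, hxn, norm_zero, Real.zero_rpow hq.ne', zero_add]
    rw [hMap, if_pos hxn, this, sub_self, Real.zero_rpow (by positivity), norm_zero]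
  · have hdiff : 0 ≤ (lpTail p x n) ^ s - (lpTail p x (n + 1)) ^ s :=
      sub_nonneg.2 (Real.rpow_le_rpow (lpTail_nonneg p x _) (lpTail_succ_le hx n) hs)
    rw [hMap_eq, norm_mul, norm_div, Complex.norm_real, norm_norm,
      div_self (norm_ne_zero_iff.2 hxn), one_mul, Complex.norm_real,
      Real.norm_of_nonneg (by positivity)]

lemma norm_hMap_rpow (hq : 0 < p.toReal) (hs : 0 ≤ s) (hx : Summable fun n => ‖x n‖ ^ p.toReal)
    (n : ℕ) : ‖hMap p s x n‖ ^ p.toReal = (lpTail p x n) ^ s - (lpTail p x (n + 1)) ^ s := by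
  have hdiff : 0 ≤ (lpTail p x n) ^ s - (lpTail p x (n + 1)) ^ s :=
    sub_nonneg.2 (Real.rpow_le_rpow (lpTail_nonneg p x _) (lpTail_succ_le hx n) hs)
  rw [norm_hMap hq hs hx, one_div, Real.rpow_inv_rpow hdiff hq.ne']

lemma hasSum_norm_hMap_rpow (hq : 0 < p.toReal) (hs : 0 < s)
    (hx : Summable fun n => ‖x n‖ ^ p.toReal) (n : ℕ) :
    HasSum (fun k => ‖hMap p s x (n + k)‖ ^ p.toReal) ((lpTail p x n) ^ s) := by
  rw [hasSum_iff_tendsto_nat_of_nonneg fun k => by positivity]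
  have htel : ∀ m, ∑ k ∈ Finset.range m, ‖hMap p s x (n + k)‖ ^ p.toReal
      = (lpTail p x n) ^ s - (lpTail p x (n + m)) ^ s := fun m => by
    have := Finset.sum_range_sub' (fun k => (lpTail p x (n + k)) ^ s) m
    simpa only [norm_hMap_rpow hq hs.le hx, add_zero, ← add_assoc] using this
  have hlim : Tendsto (fun m => (lpTail p x (n + m)) ^ s) atTop (𝓝 0) := by
    have := ((tendsto_lpTail_atTop p x).comp (tendsto_add_atTop_nat n)).rpow_const
      (p := s) (Or.inr hs.le)
    simpa only [Real.zero_rpow hs.ne', Function.comp_def, add_comm] using this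
  simpa only [htel, sub_zero] using tendsto_const_nhds.sub hlim

lemma lpTail_hMap (hq : 0 < p.toReal) (hs : 0 < s) (hx : Summable fun n => ‖x n‖ ^ p.toReal)
    (n : ℕ) : lpTail p (hMap p s x) n = (lpTail p x n) ^ s :=
  (hasSum_norm_hMap_rpow hq hs hx n).tsum_eq

lemma summable_norm_hMap_rpow (hq : 0 < p.toReal) (hs : 0 < s)
    (hx : Summable fun n => ‖x n‖ ^ p.toReal) :
    Summable fun n => ‖hMap p s x n‖ ^ p.toReal := by
  simpa only [zero_add] using (hasSum_norm_hMap_rpow hq hs hx 0).summable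

lemma hMap_div_norm_hMap (hq : 0 < p.toReal) (hs : 0 < s)
    (hx : Summable fun n => ‖x n‖ ^ p.toReal) (n : ℕ) :
    hMap p s x n / ‖hMap p s x n‖ = x n / ‖x n‖ := by
  by_cases hxn : x n = 0
  · simp [hMap, hxn]
  · have hpos : 0 < ‖hMap p s x n‖ := by
      rw [norm_hMap hq hs.le hx]
      exact Real.rpow_pos_of_pos (sub_pos.2 (Real.rpow_lt_rpow (lpTail_nonneg p x _)
        (lpTail_succ_lt hx hxn) hs)) _
    have h : hMap p s x n = (x n / ‖x n‖) * ‖hMap p s x n‖ := by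
      rw [norm_hMap hq hs.le hx, hMap_eq]
    nth_rewrite 1 [h]
    rw [mul_div_assoc, div_self (Complex.ofReal_ne_zero.2 hpos.ne'), mul_one]

lemma hMap_inv_hMap (hq : 0 < p.toReal) (hs : 0 < s)
    (hx : Summable fun n => ‖x n‖ ^ p.toReal) : hMap p s⁻¹ (hMap p s x) = x := by
  funext n
  have hmod : ((lpTail p x n) - lpTail p x (n + 1)) ^ (1 / p.toReal) = ‖x n‖ := by
    rw [lpTail_eq_norm_rpow_add hx n, add_sub_cancel_right, one_div,
      Real.rpow_rpow_inv (norm_nonneg _) hq.ne']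
  rw [hMap_eq, hMap_div_norm_hMap hq hs hx, lpTail_hMap hq hs hx, lpTail_hMap hq hs hx,
    Real.rpow_rpow_inv (lpTail_nonneg p x _) hs.ne',
    Real.rpow_rpow_inv (lpTail_nonneg p x _) hs.ne', hmod]
  by_cases hxn : x n = 0
  · simp [hxn]
  · exact div_mul_cancel₀ _ (Complex.ofReal_ne_zero.2 (norm_ne_zero_iff.2 hxn))

end Modulus

section Lp

variable {p : ℝ≥0∞} [Fact (1 ≤ p)]

lemma toReal_pos_of_ne_top (hp : p ≠ ∞) : 0 < p.toReal :=
  ENNReal.toReal_pos (zero_lt_one.trans_le Fact.out).ne' hp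

theorem lp.tendsto_of_tendsto_apply_of_tendsto_norm {α ι : Type*} {E : α → Type*}
    [∀ i, NormedAddCommGroup (E i)] (hp : p ≠ ∞) {l : Filter ι} {F : ι → lp E p}
    {f : lp E p} (happly : ∀ i, Tendsto (fun k => F k i) l (𝓝 (f i)))
    (hnorm : Tendsto (fun k => ‖F k‖) l (𝓝 ‖f‖)) : Tendsto F l (𝓝 f) := by
  classical
  have hq := toReal_pos_of_ne_top hp
  set P : Finset α → lp E p → lp E p := fun s g => ∑ i ∈ s, lp.single p i (g i)
  rw [Metric.tendsto_nhds]
  intro ε hε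
  obtain ⟨s, hs⟩ : ∃ s, ‖P s f - f‖ < ε / 3 := by
    simpa only [dist_eq_norm] using
      ((lp.hasSum_single hp f).eventually (Metric.ball_mem_nhds f (by positivity))).exists
  have hproj : ∀ᶠ k in l, ‖P s (F k) - P s f‖ < ε / 3 := by
    have : Tendsto (fun k => P s (F k)) l (𝓝 (P s f)) :=
      tendsto_finsetSum s fun i _ =>
        (lp.isometry_single i).continuous.continuousAt.tendsto.comp (happly i)
    exact (tendsto_iff_norm_sub_tendsto_zero.1 this).eventually_lt_const (by positivity)
  have hcompl : ∀ᶠ k in l, ‖F k - P s (F k)‖ < ε / 3 := by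
    have hlim : Tendsto (fun k => ‖F k‖ ^ p.toReal - ∑ i ∈ s, ‖F k i‖ ^ p.toReal) l
        (𝓝 (‖f‖ ^ p.toReal - ∑ i ∈ s, ‖f i‖ ^ p.toReal)) :=
      (hnorm.rpow_const (Or.inr hq.le)).sub
        (tendsto_finsetSum s fun i _ => ((happly i).norm.rpow_const (Or.inr hq.le)))
    have hf : ‖f‖ ^ p.toReal - ∑ i ∈ s, ‖f i‖ ^ p.toReal < (ε / 3) ^ p.toReal := by
      rw [← lp.norm_compl_sum_single hq, ← norm_neg, neg_sub]
      exact Real.rpow_lt_rpow (norm_nonneg _) hs hq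
    filter_upwards [hlim.eventually_lt_const hf] with k hk
    rw [← lp.norm_compl_sum_single hq] at hk
    exact (Real.rpow_lt_rpow_iff (norm_nonneg _) (by positivity) hq).1 hk
  filter_upwards [hproj, hcompl] with k hk₁ hk₂
  rw [dist_eq_norm]
  calc ‖F k - f‖ = ‖(F k - P s (F k)) + (P s (F k) - P s f) + (P s f - f)‖ := by abel_nf
    _ ≤ ‖F k - P s (F k)‖ + ‖P s (F k) - P s f‖ + ‖P s f - f‖ := norm_add₃_le
    _ < ε := by linarith

variable {s : ℝ}

lemma lpTail_eq_norm_rpow_sub (hp : p ≠ ∞) (y : lp (fun _ : ℕ => ℂ) p) (n : ℕ) :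
    lpTail p y n = ‖y‖ ^ p.toReal - ∑ k ∈ Finset.range n, ‖y k‖ ^ p.toReal := by
  rw [lp.norm_rpow_eq_tsum (toReal_pos_of_ne_top hp),
    ← ((lp.memℓp y).summable (toReal_pos_of_ne_top hp)).sum_add_tsum_nat_add n, lpTail]
  simp only [add_comm n, add_sub_cancel_left]

lemma continuous_lpTail (hp : p ≠ ∞) (n : ℕ) :
    Continuous fun y : lp (fun _ : ℕ => ℂ) p => lpTail p y n := by
  have hq := toReal_pos_of_ne_top hp
  simp only [lpTail_eq_norm_rpow_sub hp]
  exact (continuous_norm.rpow_const fun _ => Or.inr hq.le).sub <| continuous_finsetSum _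
    fun k _ => (lp.lipschitzWith_one_eval p k).continuous.norm.rpow_const fun _ => Or.inr hq.le

lemma continuousAt_hMap_apply (hp : p ≠ ∞) (hs : 0 ≤ s) (x : lp (fun _ : ℕ => ℂ) p) (n : ℕ) :
    ContinuousAt (fun y : lp (fun _ : ℕ => ℂ) p => hMap p s y n) x := by
  have hq := toReal_pos_of_ne_top hp
  set g : lp (fun _ : ℕ => ℂ) p → ℝ := fun y =>
    ((lpTail p y n) ^ s - (lpTail p y (n + 1)) ^ s) ^ (1 / p.toReal)
  have hg : Continuous g := by
    refine Continuous.rpow_const ?_ fun _ => Or.inr (by positivity)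
    exact ((continuous_lpTail hp n).rpow_const fun _ => Or.inr hs).sub
      ((continuous_lpTail hp (n + 1)).rpow_const fun _ => Or.inr hs)
  have hnorm (y : lp (fun _ : ℕ => ℂ) p) : ‖hMap p s y n‖ = g y :=
    norm_hMap hq hs ((lp.memℓp y).summable hq) n
  have hcoord := (lp.lipschitzWith_one_eval (E := fun _ : ℕ => ℂ) p n).continuous
  by_cases hxn : x n = 0
  · have hgx : g x = 0 := by rw [← hnorm, hMap, if_pos hxn, norm_zero]
    rw [ContinuousAt, hMap, if_pos hxn, tendsto_zero_iff_norm_tendsto_zero]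
    simpa only [hnorm, hgx] using hg.tendsto x
  · simp only [hMap_eq]
    refine ContinuousAt.mul ?_ (Complex.continuous_ofReal.comp hg).continuousAt
    exact hcoord.continuousAt.div (Complex.continuous_ofReal.comp hcoord.norm).continuousAt
      (by simpa using hxn)

lemma memℓp_hMap (hp : p ≠ ∞) (hs : 0 < s) (x : lp (fun _ : ℕ => ℂ) p) : Memℓp (hMap p s x) p :=
  memℓp_gen (summable_norm_hMap_rpow (toReal_pos_of_ne_top hp) hs
    ((lp.memℓp x).summable (toReal_pos_of_ne_top hp)))

noncomputable def hMapLp (hp : p ≠ ∞) (hs : 0 < s) (x : lp (fun _ : ℕ => ℂ) p) :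
    lp (fun _ : ℕ => ℂ) p :=
  ⟨hMap p s x, memℓp_hMap hp hs x⟩

lemma coe_hMapLp (hp : p ≠ ∞) (hs : 0 < s) (x : lp (fun _ : ℕ => ℂ) p) :
    ⇑(hMapLp hp hs x) = hMap p s x :=
  rfl

lemma norm_hMapLp (hp : p ≠ ∞) (hs : 0 < s) (x : lp (fun _ : ℕ => ℂ) p) :
    ‖hMapLp hp hs x‖ = ‖x‖ ^ s := by
  have hq := toReal_pos_of_ne_top hp
  have hx := (lp.memℓp x).summable hq
  have h : ‖hMapLp hp hs x‖ ^ p.toReal = (‖x‖ ^ s) ^ p.toReal := by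
    rw [lp.norm_rpow_eq_tsum hq, ← Real.rpow_mul (norm_nonneg _), mul_comm,
      Real.rpow_mul (norm_nonneg _), lp.norm_rpow_eq_tsum hq]
    simpa only [coe_hMapLp, lpTail, zero_add] using lpTail_hMap hq hs hx 0
  exact (Real.rpow_left_inj (norm_nonneg _) (by positivity) hq.ne').1 h

lemma continuous_hMapLp (hp : p ≠ ∞) (hs : 0 < s) : Continuous (hMapLp hp hs) :=
  continuous_iff_continuousAt.2 fun x =>
    lp.tendsto_of_tendsto_apply_of_tendsto_norm hp (continuousAt_hMap_apply hp hs.le x)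
      (by simpa only [norm_hMapLp] using
        (continuous_norm.rpow_const fun _ => Or.inr hs.le).tendsto x)

lemma hMapLp_inv_hMapLp (hp : p ≠ ∞) (hs : 0 < s) (x : lp (fun _ : ℕ => ℂ) p) :
    hMapLp hp (inv_pos.2 hs) (hMapLp hp hs x) = x :=
  Subtype.ext (hMap_inv_hMap (toReal_pos_of_ne_top hp) hs
    ((lp.memℓp x).summable (toReal_pos_of_ne_top hp)))

noncomputable def hMapHomeomorph (hp : p ≠ ∞) (hs : 0 < s) :
    lp (fun _ : ℕ => ℂ) p ≃ₜ lp (fun _ : ℕ => ℂ) p where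
  toFun := hMapLp hp hs
  invFun := hMapLp hp (inv_pos.2 hs)
  left_inv := hMapLp_inv_hMapLp hp hs
  right_inv x := by
    simpa only [inv_inv] using hMapLp_inv_hMapLp hp (inv_pos.2 hs) x
  continuous_toFun := continuous_hMapLp hp hs
  continuous_invFun := continuous_hMapLp hp (inv_pos.2 hs)

end Lp

/-- `h_p^(s)` is a homeomorphism of `ℓ^p` onto itself. -/
theorem hMap_homeomorph (p : ℝ≥0∞) [Fact (1 ≤ p)] (hp : p ≠ ∞) (s : ℝ) (hs : 0 < s)
    (H : lp (fun _ : ℕ => ℂ) p → lp (fun _ : ℕ => ℂ) p)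
    (hH : ∀ (x : lp (fun _ : ℕ => ℂ) p) (n : ℕ), (H x : ℕ → ℂ) n = hMap p s x n) :
    ∃ e : lp (fun _ : ℕ => ℂ) p ≃ₜ lp (fun _ : ℕ => ℂ) p, ⇑e = H :=
  ⟨hMapHomeomorph hp hs,
    funext fun x => lp.ext <| (coe_hMapLp hp hs x).trans (funext (hH x)).symm⟩
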